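/- Let A and B be finite categories. (1) If k^• is a weighting on A and l^• is a weighting on B, then the function sending (a,b) to k^a · l^b is a weighting on the product category A × B; moreover if A and B have Möbius inversion then so does A × B, with μ_{A×B}((a,b),(a',b')) = μ_A(a,a') · μ_B(b,b'). (2) If k^• is a weighting on A and l^• is a weighting on B, then the function on the disjoint union category A ⊔ B restricting to k^• on A and to l^• on B is a weighting on A ⊔ B; moreover if A and B have Möbius inversion then so does A ⊔ B, with Möbius function restricting to μ_A and μ_B on the two summands and vanishing on pairs of objects lying in different summands. -/

import Mathlib

/-!
Regard `ζ` as a matrix: a weighting is a solution of `ζ k = 1` and a Möbius function is a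
two-sided inverse of `ζ`. The zeta matrix of `A × B` is the Kronecker product `ζ_A ⊗ ζ_B`, and that
of `A ⊕ B` is the block-diagonal matrix `diag(ζ_A, ζ_B)`. Both constructions are multiplicative, so
they carry weightings and inverses of `ζ_A` and `ζ_B` to those of the product and the sum.
-/

open CategoryTheory
open scoped Kronecker

instance prodHomFintype {A : Type u} [Category.{v} A] {B : Type u} [Category.{v} B]
    [∀ a b : A, Fintype (a ⟶ b)] [∀ a b : B, Fintype (a ⟶ b)]
    (p q : A × B) : Fintype (p ⟶ q) :=
  inferInstanceAs (Fintype ((p.1 ⟶ q.1) × (p.2 ⟶ q.2)))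

instance sumHomFintype {A : Type u} [Category.{v} A] {B : Type u} [Category.{v} B]
    [∀ a b : A, Fintype (a ⟶ b)] [∀ a b : B, Fintype (a ⟶ b)] :
    ∀ X Y : A ⊕ B, Fintype (X ⟶ Y)
  | .inl a, .inl a' => inferInstanceAs (Fintype (ULift.{v} (a ⟶ a')))
  | .inl _, .inr _ => inferInstanceAs (Fintype PEmpty)
  | .inr _, .inl _ => inferInstanceAs (Fintype PEmpty)
  | .inr b, .inr b' => inferInstanceAs (Fintype (ULift.{v} (b ⟶ b')))

namespace Matrix

variable {R m n : Type*} [CommSemiring R] [Fintype m] [Fintype n]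

theorem kronecker_mulVec_kronecker (M : Matrix m m R) (N : Matrix n n R) (x : m → R)
    (y : n → R) :
    (M ⊗ₖ N) *ᵥ (fun p => x p.1 * y p.2) = fun p => (M *ᵥ x) p.1 * (N *ᵥ y) p.2 := by
  ext p
  simp only [mulVec, dotProduct, kroneckerMap_apply, Fintype.sum_prod_type, Finset.sum_mul_sum]
  exact Finset.sum_congr rfl fun _ _ => Finset.sum_congr rfl fun _ _ => by ring

end Matrix

open Matrix

def zeta (R : Type*) [NatCast R] (A : Type*) [Category A] [∀ a b : A, Fintype (a ⟶ b)] :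
    Matrix A A R :=
  of fun a b => Fintype.card (a ⟶ b)

section

variable (R : Type*) {A : Type u} [Category.{v} A] [∀ a b : A, Fintype (a ⟶ b)]
  {B : Type u} [Category.{v} B] [∀ a b : B, Fintype (a ⟶ b)]

def IsWeighting [NonAssocSemiring R] [Fintype A] (k : A → R) : Prop :=
  zeta R A *ᵥ k = 1

def IsMobiusFunction [NonAssocSemiring R] [Fintype A] [DecidableEq A] (μ : Matrix A A R) :
    Prop :=
  μ * zeta R A = 1 ∧ zeta R A * μ = 1

variable {R}

theorem zeta_prod [NonAssocSemiring R] : zeta R (A × B) = zeta R A ⊗ₖ zeta R B := by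
  ext p q
  simp only [zeta, of_apply, kroneckerMap_apply, ← Nat.cast_mul, ← Fintype.card_prod]
  rfl

theorem zeta_sum [AddMonoidWithOne R] :
    zeta R (A ⊕ B) = fromBlocks (zeta R A) 0 0 (zeta R B) := by
  ext (a | b) (a' | b') <;>
    simp only [zeta, of_apply, fromBlocks_apply₁₁, fromBlocks_apply₁₂, fromBlocks_apply₂₁,
      fromBlocks_apply₂₂, Matrix.zero_apply]
  · exact congrArg Nat.cast (Fintype.card_ulift _)
  · exact (congrArg Nat.cast Fintype.card_pempty).trans Nat.cast_zero
  · exact (congrArg Nat.cast Fintype.card_pempty).trans Nat.cast_zero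
  · exact congrArg Nat.cast (Fintype.card_ulift _)

theorem isWeighting_iff [NonAssocSemiring R] [Fintype A] {k : A → R} :
    IsWeighting R k ↔ ∀ a, ∑ b, (Fintype.card (a ⟶ b) : R) * k b = 1 :=
  funext_iff

theorem isMobiusFunction_iff [NonAssocSemiring R] [Fintype A] [DecidableEq A]
    {μ : Matrix A A R} :
    IsMobiusFunction R μ ↔
      (∀ a c, ∑ b, μ a b * (Fintype.card (b ⟶ c) : R) = if a = c then 1 else 0) ∧
      (∀ a c, ∑ b, (Fintype.card (a ⟶ b) : R) * μ b c = if a = c then 1 else 0) := by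
  simp only [IsMobiusFunction, ← Matrix.ext_iff, mul_apply, one_apply, zeta, of_apply]

theorem IsWeighting.prod [CommSemiring R] [Fintype A] [Fintype B] {k : A → R} {l : B → R}
    (hk : IsWeighting R k) (hl : IsWeighting R l) :
    IsWeighting R fun p : A × B => k p.1 * l p.2 := by
  rw [IsWeighting, zeta_prod, kronecker_mulVec_kronecker, hk, hl]
  exact funext fun _ => one_mul 1

theorem IsWeighting.sum [NonAssocSemiring R] [Fintype A] [Fintype B] {k : A → R} {l : B → R}
    (hk : IsWeighting R k) (hl : IsWeighting R l) : IsWeighting R (Sum.elim k l) := by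
  rw [IsWeighting, zeta_sum, fromBlocks_mulVec]
  simp only [Sum.elim_comp_inl, Sum.elim_comp_inr, zero_mulVec, add_zero, zero_add]
  rw [hk, hl, Sum.elim_one_one]

theorem IsMobiusFunction.prod [CommSemiring R] [Fintype A] [DecidableEq A] [Fintype B]
    [DecidableEq B] {μA : Matrix A A R} {μB : Matrix B B R}
    (hA : IsMobiusFunction R μA) (hB : IsMobiusFunction R μB) :
    IsMobiusFunction R (μA ⊗ₖ μB) := by
  simp only [IsMobiusFunction, zeta_prod, ← mul_kronecker_mul, hA.1, hA.2, hB.1, hB.2,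
    one_kronecker_one, and_self]

theorem IsMobiusFunction.sum [NonAssocSemiring R] [Fintype A] [DecidableEq A] [Fintype B]
    [DecidableEq B] {μA : Matrix A A R} {μB : Matrix B B R}
    (hA : IsMobiusFunction R μA) (hB : IsMobiusFunction R μB) :
    IsMobiusFunction R (fromBlocks μA 0 0 μB) := by
  simp only [IsMobiusFunction, zeta_sum, fromBlocks_multiply, hA.1, hA.2, hB.1, hB.2,
    Matrix.mul_zero, Matrix.zero_mul, add_zero, zero_add, fromBlocks_one, and_self]

end

open scoped Classical in
/-- **Lemma 1.11** (Leinster). Weightings and Möbius functions are compatible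
with products and disjoint unions of finite categories. -/
theorem stmt_6 {A : Type u} [Category.{v} A] [Fintype A]
    [∀ a b : A, Fintype (a ⟶ b)]
    {B : Type u} [Category.{v} B] [Fintype B]
    [∀ a b : B, Fintype (a ⟶ b)] :
    -- (1) products
    ((∀ (k : A → ℚ) (l : B → ℚ),
        (∀ a : A, ∑ a' : A, (Fintype.card (a ⟶ a') : ℚ) * k a' = 1) →
        (∀ b : B, ∑ b' : B, (Fintype.card (b ⟶ b') : ℚ) * l b' = 1) →
        ∀ p : A × B, ∑ q : A × B, (Fintype.card (p ⟶ q) : ℚ) * (k q.1 * l q.2) = 1) ∧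
     (∀ (μA : A → A → ℚ) (μB : B → B → ℚ),
        (∀ a c : A, ∑ b : A, μA a b * (Fintype.card (b ⟶ c) : ℚ) = if a = c then 1 else 0) →
        (∀ a c : A, ∑ b : A, (Fintype.card (a ⟶ b) : ℚ) * μA b c = if a = c then 1 else 0) →
        (∀ a c : B, ∑ b : B, μB a b * (Fintype.card (b ⟶ c) : ℚ) = if a = c then 1 else 0) →
        (∀ a c : B, ∑ b : B, (Fintype.card (a ⟶ b) : ℚ) * μB b c = if a = c then 1 else 0) →
        (∀ p r : A × B,
          ∑ q : A × B, (μA p.1 q.1 * μB p.2 q.2) * (Fintype.card (q ⟶ r) : ℚ) =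
            if p = r then 1 else 0) ∧
        (∀ p r : A × B,
          ∑ q : A × B, (Fintype.card (p ⟶ q) : ℚ) * (μA q.1 r.1 * μB q.2 r.2) =
            if p = r then 1 else 0))) ∧
    -- (2) disjoint unions
    ((∀ (k : A → ℚ) (l : B → ℚ),
        (∀ a : A, ∑ a' : A, (Fintype.card (a ⟶ a') : ℚ) * k a' = 1) →
        (∀ b : B, ∑ b' : B, (Fintype.card (b ⟶ b') : ℚ) * l b' = 1) →
        ∀ X : A ⊕ B, ∑ Y : A ⊕ B, (Fintype.card (X ⟶ Y) : ℚ) * (Sum.elim k l Y) = 1) ∧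
     (∀ (μA : A → A → ℚ) (μB : B → B → ℚ),
        (∀ a c : A, ∑ b : A, μA a b * (Fintype.card (b ⟶ c) : ℚ) = if a = c then 1 else 0) →
        (∀ a c : A, ∑ b : A, (Fintype.card (a ⟶ b) : ℚ) * μA b c = if a = c then 1 else 0) →
        (∀ a c : B, ∑ b : B, μB a b * (Fintype.card (b ⟶ c) : ℚ) = if a = c then 1 else 0) →
        (∀ a c : B, ∑ b : B, (Fintype.card (a ⟶ b) : ℚ) * μB b c = if a = c then 1 else 0) →
        ∀ μ : (A ⊕ B) → (A ⊕ B) → ℚ,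
          (∀ a a' : A, μ (.inl a) (.inl a') = μA a a') →
          (∀ b b' : B, μ (.inr b) (.inr b') = μB b b') →
          (∀ a b, μ (.inl a) (.inr b) = 0) → (∀ b a, μ (.inr b) (.inl a) = 0) →
          (∀ X Z : A ⊕ B,
            ∑ Y : A ⊕ B, μ X Y * (Fintype.card (Y ⟶ Z) : ℚ) = if X = Z then 1 else 0) ∧
          (∀ X Z : A ⊕ B,
            ∑ Y : A ⊕ B, (Fintype.card (X ⟶ Y) : ℚ) * μ Y Z = if X = Z then 1 else 0))) := by
  refine ⟨⟨fun k l hk hl => ?_, fun μA μB hA₁ hA₂ hB₁ hB₂ => ?_⟩,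
    ⟨fun k l hk hl => ?_, fun μA μB hA₁ hA₂ hB₁ hB₂ μ hAA hBB hAB hBA => ?_⟩⟩
  · exact isWeighting_iff.1 ((isWeighting_iff.2 hk).prod (isWeighting_iff.2 hl))
  · exact isMobiusFunction_iff.1 <|
      (isMobiusFunction_iff.2 ⟨hA₁, hA₂⟩).prod (isMobiusFunction_iff.2 ⟨hB₁, hB₂⟩)
  · exact isWeighting_iff.1 ((isWeighting_iff.2 hk).sum (isWeighting_iff.2 hl))
  · obtain rfl : μ = fromBlocks μA 0 0 μB := by
      ext (a | b) (a' | b')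
      exacts [hAA a a', hAB a b', hBA b a', hBB b b']
    exact isMobiusFunction_iff.1 <|
      (isMobiusFunction_iff.2 ⟨hA₁, hA₂⟩).sum (isMobiusFunction_iff.2 ⟨hB₁, hB₂⟩)
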